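/- Let b > 1, ε > 0, C₀ ≥ 0, C ≥ 0 with 1 + ε − 2b < −1, and let Z : [0,T) → ℝ be positive and differentiable with Z' + (b/(1+t)) Z ≤ C (1+t)^{1+ε} Z³ + C₀ (1+t)^{−1−ε} Z and Z(0) = Z₀. If Z₀² · 2C ∫₀^∞ (1+s)^{1+ε−2b} exp( (2C₀/ε)(1 − (1+s)^{-ε}) ) ds < 1, then Z(t) ≤ K (1+t)^{-b} for all t ∈ [0,T), where K depends only on Z₀, C, C₀, b, ε. -/

import Mathlib

/-!
The Bernoulli substitution `y = Z⁻²` turns the cubic differential inequality into the linear one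
`y' ≥ 2 p y - 2 q` with `p t = b / (1 + t) - C₀ (1 + t)^(-1-ε)` and `q t = C (1 + t)^(1+ε)`.
For the integrating factor `μ = exp (-∫ 2 p) = (1 + t)^(-2b) exp ((2 C₀ / ε) (1 - (1 + t)^(-ε)))`
the function `μ y + 2 ∫₀ᵗ q μ` is nondecreasing, hence
`μ t / Z t ² ≥ Z₀⁻² - 2 C ∫₀^∞ (1 + s)^(1+ε) μ s ds`, which is positive by the smallness assumption.
As `μ t ≤ exp (2 C₀ / ε) (1 + t)^(-2b)`, this bounds `Z t` by a multiple of `(1 + t)^(-b)`.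
-/

open MeasureTheory Set Real Filter Topology

lemma continuousOn_one_add_rpow (p : ℝ) : ContinuousOn (fun s : ℝ => (1 + s) ^ p) (Ioi (-1)) :=
  (continuousOn_const.add continuousOn_id).rpow_const fun _ hs =>
    Or.inl (neg_lt_iff_pos_add'.1 hs).ne'

lemma exp_mul_one_sub_rpow_le {c x ε : ℝ} (hc : 0 ≤ c) (hx : 0 ≤ x) :
    exp (c * (1 - x ^ ε)) ≤ exp c := by
  have := rpow_nonneg hx ε
  gcongr
  nlinarith

lemma integrableOn_Ioi_one_add_rpow_mul_exp {a c ε : ℝ} (ha : a < -1) (hc : 0 ≤ c) :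
    IntegrableOn (fun s => (1 + s) ^ a * exp (c * (1 - (1 + s) ^ (-ε)))) (Ioi 0) := by
  have hcont : ContinuousOn (fun s => (1 + s) ^ a * exp (c * (1 - (1 + s) ^ (-ε)))) (Ioi 0) :=
    ((continuousOn_one_add_rpow a).mul (continuousOn_const.mul
      (continuousOn_const.sub (continuousOn_one_add_rpow _))).rexp).mono
      (Ioi_subset_Ioi (by norm_num))
  have hdom : IntegrableOn (fun s => exp c * (s + 1) ^ a) (Ioi 0) :=
    (integrableOn_add_rpow_Ioi_of_lt ha (by norm_num)).const_mul _
  refine hdom.mono' (hcont.aestronglyMeasurable measurableSet_Ioi) ?_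
  refine (ae_restrict_iff' measurableSet_Ioi).2 (Eventually.of_forall fun s hs => ?_)
  have h1s : 0 ≤ 1 + s := by linarith [mem_Ioi.1 hs]
  rw [norm_mul, norm_of_nonneg (rpow_nonneg h1s _), norm_of_nonneg (exp_nonneg _), add_comm s,
    mul_comm]
  exact mul_le_mul_of_nonneg_right (exp_mul_one_sub_rpow_le hc h1s) (rpow_nonneg h1s _)

lemma intervalIntegral_le_setIntegral_Ioi {f : ℝ → ℝ} {t : ℝ} (ht : 0 ≤ t)
    (hf : IntegrableOn f (Ioi 0)) (hf0 : ∀ s ∈ Ioi (0 : ℝ), 0 ≤ f s) :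
    ∫ s in 0..t, f s ≤ ∫ s in Ioi 0, f s := by
  rw [intervalIntegral.integral_of_le ht]
  exact setIntegral_mono_set hf ((ae_restrict_iff' measurableSet_Ioi).2 (Eventually.of_forall hf0))
    Ioc_subset_Ioi_self.eventuallyLE

lemma hasDerivAt_integral_of_continuousOn_Ico {g : ℝ → ℝ} {T x : ℝ}
    (hg : ContinuousOn g (Ico 0 T)) (hx : x ∈ Ioo 0 T) :
    HasDerivAt (fun r => ∫ s in 0..r, g s) (g x) x := by
  refine intervalIntegral.integral_hasDerivAt_right ?_ ?_ ?_
  · exact (hg.mono fun s hs => ⟨hs.1, hs.2.trans_lt hx.2⟩).intervalIntegrable_of_Icc hx.1.le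
  · exact (hg.mono Ioo_subset_Ico_self).stronglyMeasurableAtFilter isOpen_Ioo x hx
  · exact hg.continuousAt (Ico_mem_nhds hx.1 hx.2)

theorem bernoulli_comparison {T : ℝ} {Z Z' μ p q : ℝ → ℝ}
    (hZ : ∀ t ∈ Ico 0 T, HasDerivAt Z (Z' t) t) (hZpos : ∀ t ∈ Ico 0 T, 0 < Z t)
    (hμ : ∀ t ∈ Ico 0 T, HasDerivAt μ (-2 * p t * μ t) t) (hμpos : ∀ t ∈ Ico 0 T, 0 ≤ μ t)
    (hqμ : ContinuousOn (fun t => q t * μ t) (Ico 0 T))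
    (hineq : ∀ t ∈ Ico 0 T, Z' t + p t * Z t ≤ q t * Z t ^ 3) :
    ∀ t ∈ Ico 0 T, μ 0 / Z 0 ^ 2 ≤ μ t / Z t ^ 2 + 2 * ∫ s in 0..t, q s * μ s := by
  set F : ℝ → ℝ := fun r => μ r / Z r ^ 2 + 2 * ∫ s in 0..r, q s * μ s
  have hF : ∀ x ∈ Ioo 0 T, HasDerivAt F
      (2 * μ x / Z x ^ 3 * (q x * Z x ^ 3 - (Z' x + p x * Z x))) x := fun x hx => by
    have hZx := hZpos x (Ioo_subset_Ico_self hx)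
    refine (((hμ x (Ioo_subset_Ico_self hx)).div ((hZ x (Ioo_subset_Ico_self hx)).pow 2)
      (pow_ne_zero 2 hZx.ne')).add
      ((hasDerivAt_integral_of_continuousOn_Ico hqμ hx).const_mul 2)).congr_deriv ?_
    simp only [Pi.pow_apply]
    field_simp
    ring
  intro t ht
  have hsub : Icc 0 t ⊆ Ico 0 T := fun x hx => ⟨hx.1, hx.2.trans_lt ht.2⟩
  have hFcont : ContinuousOn F (Icc 0 t) := by
    have hquot : ContinuousOn (fun r => μ r / Z r ^ 2) (Icc 0 t) := fun x hx =>
      ((hμ x (hsub hx)).continuousAt.div ((hZ x (hsub hx)).continuousAt.pow 2)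
        (pow_ne_zero 2 (hZpos x (hsub hx)).ne')).continuousWithinAt
    refine hquot.add (continuousOn_const.mul ?_)
    rw [← uIcc_of_le ht.1] at hsub ⊢
    exact intervalIntegral.continuousOn_primitive_interval
      ((hqμ.mono hsub).integrableOn_compact isCompact_uIcc)
  have hinterior : ∀ x ∈ interior (Icc 0 t), x ∈ Ioo 0 T := fun x hx => by
    rw [interior_Icc] at hx
    exact ⟨hx.1, hx.2.trans ht.2⟩
  have hmono : MonotoneOn F (Icc 0 t) :=
    monotoneOn_of_hasDerivWithinAt_nonneg (convex_Icc 0 t) hFcont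
      (fun x hx => (hF x (hinterior x hx)).hasDerivWithinAt) fun x hx =>
        have hx := Ioo_subset_Ico_self (hinterior x hx)
        mul_nonneg (div_nonneg (mul_nonneg zero_le_two (hμpos x hx)) (pow_pos (hZpos x hx) 3).le)
          (sub_nonneg.2 (hineq x hx))
  simpa [F] using hmono ⟨le_rfl, ht.1⟩ ⟨ht.1, le_rfl⟩ ht.1

noncomputable def integratingFactor (b ε C₀ t : ℝ) : ℝ :=
  (1 + t) ^ (-(2 * b)) * exp (2 * C₀ / ε * (1 - (1 + t) ^ (-ε)))

section integratingFactor

variable {b ε C₀ t : ℝ}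

lemma integratingFactor_zero : integratingFactor b ε C₀ 0 = 1 := by
  simp [integratingFactor]

lemma integratingFactor_pos (ht : 0 < 1 + t) : 0 < integratingFactor b ε C₀ t :=
  mul_pos (rpow_pos_of_pos ht _) (exp_pos _)

lemma continuousOn_integratingFactor : ContinuousOn (integratingFactor b ε C₀) (Ioi (-1)) :=
  (continuousOn_one_add_rpow _).mul
    (continuousOn_const.mul (continuousOn_const.sub (continuousOn_one_add_rpow _))).rexp

lemma hasDerivAt_integratingFactor (hε : ε ≠ 0) (ht : 0 < 1 + t) :
    HasDerivAt (integratingFactor b ε C₀)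
      (-2 * (b / (1 + t) - C₀ * (1 + t) ^ (-1 - ε)) * integratingFactor b ε C₀ t) t := by
  have hshift : HasDerivAt (fun r : ℝ => 1 + r) 1 t := (hasDerivAt_id t).const_add 1
  have hpow (a : ℝ) : HasDerivAt (fun r : ℝ => (1 + r) ^ a) (a * (1 + t) ^ (a - 1)) t := by
    simpa using hshift.rpow_const (p := a) (Or.inl ht.ne')
  refine ((hpow _).mul (((hpow _).const_sub 1).const_mul (2 * C₀ / ε)).exp).congr_deriv ?_
  rw [integratingFactor, rpow_sub_one ht.ne', rpow_sub_one ht.ne', show -1 - ε = -ε - 1 by ring,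
    rpow_sub_one ht.ne']
  field_simp
  ring

lemma integratingFactor_le (hε : 0 < ε) (hC₀ : 0 ≤ C₀) (ht : 0 ≤ t) :
    integratingFactor b ε C₀ t ≤ exp (2 * C₀ / ε) * (1 + t) ^ (-(2 * b)) := by
  rw [integratingFactor, mul_comm]
  have ht' : 0 ≤ 1 + t := by linarith
  exact mul_le_mul_of_nonneg_right (exp_mul_one_sub_rpow_le (by positivity) ht') (rpow_nonneg ht' _)

lemma one_add_rpow_mul_integratingFactor (ht : 0 < 1 + t) :
    (1 + t) ^ (1 + ε) * integratingFactor b ε C₀ t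
      = (1 + t) ^ (1 + ε - 2 * b) * exp (2 * C₀ / ε * (1 - (1 + t) ^ (-ε))) := by
  rw [integratingFactor, ← mul_assoc, ← rpow_add ht, ← sub_eq_add_neg]

lemma intervalIntegral_one_add_rpow_mul_integratingFactor_le (hε : 0 < ε) (hC₀ : 0 ≤ C₀)
    (hexp : 1 + ε - 2 * b < -1) (ht : 0 ≤ t) :
    ∫ s in 0..t, (1 + s) ^ (1 + ε) * integratingFactor b ε C₀ s
      ≤ ∫ s in Ioi 0, (1 + s) ^ (1 + ε - 2 * b) * exp (2 * C₀ / ε * (1 - (1 + s) ^ (-ε))) := by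
  rw [intervalIntegral.integral_congr fun s hs => one_add_rpow_mul_integratingFactor
    (by linarith [(uIcc_of_le ht ▸ hs).1])]
  exact intervalIntegral_le_setIntegral_Ioi ht
    (integrableOn_Ioi_one_add_rpow_mul_exp hexp (by positivity)) fun s hs =>
      mul_nonneg (rpow_nonneg (by linarith [mem_Ioi.1 hs]) _) (exp_nonneg _)

end integratingFactor

lemma le_sqrt_div_mul_rpow_of_mul_sq_le {z δ A u b : ℝ} (hδ : 0 < δ) (hu : 0 ≤ u)
    (h : δ * z ^ 2 ≤ A * u ^ (-(2 * b))) : z ≤ √(A / δ) * u ^ (-b) := by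
  have hsq : u ^ (-(2 * b)) = (u ^ (-b)) ^ 2 := by
    rw [← rpow_mul_natCast hu]; push_cast; ring_nf
  calc z ≤ √(z ^ 2) := sqrt_sq_eq_abs z ▸ le_abs_self z
    _ ≤ √(A / δ * u ^ (-(2 * b))) := by
      gcongr
      rwa [div_mul_eq_mul_div, le_div_iff₀ hδ, mul_comm]
    _ = √(A / δ) * u ^ (-b) := by rw [sqrt_mul', hsq, sqrt_sq (rpow_nonneg hu _)]; positivity

theorem stmt_19_general (b ε C₀ C Z₀ : ℝ) (hε : 0 < ε)
    (hC₀ : 0 ≤ C₀) (hC : 0 ≤ C) (hexp : 1 + ε - 2 * b < -1)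
    (hsmall : Z₀ ^ 2 * (2 * C * ∫ s in Set.Ioi (0:ℝ),
        (1 + s) ^ (1 + ε - 2 * b)
          * Real.exp ((2 * C₀ / ε) * (1 - (1 + s) ^ (-ε)))) < 1) :
    ∃ K : ℝ, ∀ (T : ℝ) (Z Z' : ℝ → ℝ),
      (∀ t ∈ Set.Ico (0:ℝ) T, HasDerivAt Z (Z' t) t) →
      (∀ t ∈ Set.Ico (0:ℝ) T, 0 < Z t) →
      Z 0 = Z₀ →
      (∀ t ∈ Set.Ico (0:ℝ) T,
        Z' t + (b / (1 + t)) * Z t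
          ≤ C * (1 + t) ^ (1 + ε) * Z t ^ 3 + C₀ * (1 + t) ^ (-1 - ε) * Z t) →
      ∀ t ∈ Set.Ico (0:ℝ) T, Z t ≤ K * (1 + t) ^ (-b) := by
  set δ := (Z₀ ^ 2)⁻¹ - 2 * C * ∫ s in Ioi 0,
    (1 + s) ^ (1 + ε - 2 * b) * exp (2 * C₀ / ε * (1 - (1 + s) ^ (-ε)))
  refine ⟨√(exp (2 * C₀ / ε) / δ), fun T Z Z' hZ hZpos hZ0 hineq t ht => ?_⟩
  have hone_add_pos : ∀ s ∈ Ico 0 T, 0 < 1 + s := fun s hs => by linarith [hs.1]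
  have hδ : 0 < δ := by
    have hZ₀sq : 0 < Z₀ ^ 2 := pow_pos (hZ0 ▸ hZpos 0 ⟨le_rfl, ht.1.trans_lt ht.2⟩) 2
    rwa [sub_pos, ← mul_lt_mul_iff_right₀ hZ₀sq, mul_inv_cancel₀ hZ₀sq.ne']
  have hcomp := bernoulli_comparison (μ := integratingFactor b ε C₀)
    (p := fun s => b / (1 + s) - C₀ * (1 + s) ^ (-1 - ε)) (q := fun s => C * (1 + s) ^ (1 + ε))
    hZ hZpos (fun s hs => hasDerivAt_integratingFactor hε.ne' (hone_add_pos s hs))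
    (fun s hs => (integratingFactor_pos (hone_add_pos s hs)).le)
    (((continuousOn_const.mul (continuousOn_one_add_rpow _)).mul
      continuousOn_integratingFactor).mono fun s hs => mem_Ioi.2 (by linarith [hone_add_pos s hs]))
    (fun s hs => by simp only [sub_mul]; linarith [hineq s hs]) t ht
  have htail := mul_le_mul_of_nonneg_left
    (intervalIntegral_one_add_rpow_mul_integratingFactor_le hε hC₀ hexp ht.1) hC
  simp_rw [mul_assoc C, intervalIntegral.integral_const_mul] at hcomp
  rw [integratingFactor_zero, hZ0, one_div] at hcomp
  have hδle : δ ≤ integratingFactor b ε C₀ t / Z t ^ 2 := by linarith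
  refine le_sqrt_div_mul_rpow_of_mul_sq_le hδ (hone_add_pos t ht).le ?_
  calc δ * Z t ^ 2
      ≤ integratingFactor b ε C₀ t := (le_div_iff₀ (pow_pos (hZpos t ht) 2)).1 hδle
    _ ≤ exp (2 * C₀ / ε) * (1 + t) ^ (-(2 * b)) := integratingFactor_le hε hC₀ ht.1

theorem stmt_19 (b ε C₀ C Z₀ : ℝ) (hb : 1 < b) (hε : 0 < ε)
    (hC₀ : 0 ≤ C₀) (hC : 0 ≤ C) (hexp : 1 + ε - 2 * b < -1)
    (hsmall : Z₀ ^ 2 * (2 * C * ∫ s in Set.Ioi (0:ℝ),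
        (1 + s) ^ (1 + ε - 2 * b)
          * Real.exp ((2 * C₀ / ε) * (1 - (1 + s) ^ (-ε)))) < 1) :
    ∃ K : ℝ, ∀ (T : ℝ) (Z Z' : ℝ → ℝ),
      (∀ t ∈ Set.Ico (0:ℝ) T, HasDerivAt Z (Z' t) t) →
      (∀ t ∈ Set.Ico (0:ℝ) T, 0 < Z t) →
      Z 0 = Z₀ →
      (∀ t ∈ Set.Ico (0:ℝ) T,
        Z' t + (b / (1 + t)) * Z t
          ≤ C * (1 + t) ^ (1 + ε) * Z t ^ 3 + C₀ * (1 + t) ^ (-1 - ε) * Z t) →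
      ∀ t ∈ Set.Ico (0:ℝ) T, Z t ≤ K * (1 + t) ^ (-b) :=
  stmt_19_general b ε C₀ C Z₀ hε hC₀ hC hexp hsmall
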